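/- arXiv:2010.01612 — 3 statements merged into one kernel-verified Lean document; each statement's English description precedes it below -/
import Mathlib

section
/- Let 0 < s < 1 and K ≥ 1 be real numbers, and let x, y be nonnegative reals with y ≤ x ≤ K·y. Then (x + y)^s ≤ (K/(K+1))^{1-s} · (x^s + y^s). -/
theorem stmt_1 (s K x y : ℝ) (hs0 : 0 < s) (hs1 : s < 1) (hK : 1 ≤ K)
    (hy : 0 ≤ y) (hyx : y ≤ x) (hxK : x ≤ K * y) :
    (x + y) ^ s ≤ (K / (K + 1)) ^ (1 - s) * (x ^ s + y ^ s) := by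
  have hK0 : 0 < K := lt_of_lt_of_le one_pos hK
  have hK1 : 0 < K + 1 := by linarith
  rcases eq_or_lt_of_le hy with hy0 | hy0
  · have hx0 : x = 0 := le_antisymm (by nlinarith) (by linarith)
    simp [← hy0, hx0, Real.zero_rpow (ne_of_gt hs0)]
  · have hx0 : 0 < x := lt_of_lt_of_le hy0 hyx
    have hxy0 : 0 < x + y := by linarith
    set c : ℝ := (K / (K + 1)) ^ (1 - s) with hc
    have hbase : (0:ℝ) < K / (K + 1) := by positivity
    -- key: (x+y)^(s-1) ≤ c * x^(s-1)
    have h1 : (x + y) ^ (s - 1) ≤ c * x ^ (s - 1) := by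
      have hle : (K + 1) / K * x ≤ x + y := by
        rw [div_mul_eq_mul_div, div_le_iff₀ hK0]
        nlinarith
      calc (x + y) ^ (s - 1) ≤ ((K + 1) / K * x) ^ (s - 1) :=
            Real.rpow_le_rpow_of_nonpos (by positivity) hle (by linarith : s - 1 ≤ 0)
        _ = ((K + 1) / K) ^ (s - 1) * x ^ (s - 1) :=
            Real.mul_rpow (by positivity) hx0.le
        _ = c * x ^ (s - 1) := by
            congr 1
            rw [hc, show K / (K + 1) = ((K + 1) / K)⁻¹ by field_simp,
              Real.inv_rpow (by positivity), ← Real.rpow_neg (by positivity)]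
            ring_nf
    have h2 : (x + y) ^ (s - 1) ≤ c * y ^ (s - 1) := by
      have hle : 2 * y ≤ x + y := by linarith
      have h2a := Real.rpow_le_rpow_of_nonpos (by positivity) hle (by linarith : s - 1 ≤ 0)
      have h2b : ((2:ℝ) * y) ^ (s - 1) = (2:ℝ) ^ (s - 1) * y ^ (s - 1) :=
        Real.mul_rpow (by norm_num) hy0.le
      have h2c : (2:ℝ) ^ (s - 1) ≤ c := by
        rw [hc, show (2:ℝ) ^ (s - 1) = ((1:ℝ)/2) ^ (1 - s) by
          rw [show (1:ℝ)/2 = (2:ℝ)⁻¹ by norm_num, Real.inv_rpow (by norm_num),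
            ← Real.rpow_neg (by norm_num)]; ring_nf]
        exact Real.rpow_le_rpow (by norm_num) (by rw [le_div_iff₀ hK1]; linarith)
          (by linarith)
      have hyp : (0:ℝ) ≤ y ^ (s - 1) := Real.rpow_nonneg hy0.le _
      nlinarith
    have hxs : x ^ s = x * x ^ (s - 1) := by
      nth_rewrite 1 [show s = 1 + (s - 1) by ring]
      rw [Real.rpow_add hx0, Real.rpow_one]
    have hys : y ^ s = y * y ^ (s - 1) := by
      nth_rewrite 1 [show s = 1 + (s - 1) by ring]
      rw [Real.rpow_add hy0, Real.rpow_one]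
    have hxys : (x + y) ^ s = x * (x + y) ^ (s - 1) + y * (x + y) ^ (s - 1) := by
      nth_rewrite 1 [show s = 1 + (s - 1) by ring]
      rw [Real.rpow_add hxy0, Real.rpow_one]; ring
    rw [hxys, hxs, hys]
    nlinarith [mul_le_mul_of_nonneg_left h1 hx0.le, mul_le_mul_of_nonneg_left h2 hy0.le]
end

section
/- There exist constants c, C > 0 such that for every real η ≥ 2 and every positive integer N with |N - η^{1/3}| ≤ 1, one has c · η^{-1/2} e^{3 η^{1/3}} ≤ η^N / (N!)^3 ≤ C · η^{-1/2} e^{3 η^{1/3}}. -/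
/-!
With `t = η^{1/3}` the weight is `η^N / (N!)^3 = (t^N / N!)^3` and `η^{-1/2} e^{3t} = (e^t / √t)^3`,
so it suffices to show `e^{t-3}/√t ≤ t^N / N! ≤ e^t/√t` whenever `|N - t| ≤ 1`.
By Stirling, `N!` is `√N (N/e)^N` up to constants, and `t^N` is compared with `e^t (N/e)^N` through
`log x ≤ x - 1`: applied to `x = t/N` it gives `t^N ≤ e^t (N/e)^N`, and applied to `x = N/t` it gives
`t^N ≥ e^{t - (t-N)^2/t} (N/e)^N`, where the Gaussian loss `(t-N)^2/t` is at most `1`.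
-/

open Real Nat

namespace Stirling

/-- The Stirling sequence decreases from its first term `e / √2`. -/
theorem factorial_le_exp_one_mul_sqrt_mul {n : ℕ} (hn : n ≠ 0) :
    (n ! : ℝ) ≤ exp 1 * √n * (n / exp 1) ^ n := by
  obtain ⟨m, rfl⟩ := exists_eq_add_one_of_ne_zero hn
  have h : stirlingSeq (m + 1) ≤ exp 1 / √2 := by
    simpa [stirlingSeq_one] using stirlingSeq'_antitone (Nat.zero_le m)
  rw [stirlingSeq, div_le_div_iff₀ (by positivity) (by positivity),
    sqrt_mul zero_le_two] at h
  refine le_of_mul_le_mul_right ?_ (by positivity : (0 : ℝ) < √2)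
  linarith

end Stirling

theorem pow_le_exp_mul_div_exp_one_pow {t : ℝ} (ht : 0 ≤ t) (N : ℕ) :
    t ^ N ≤ exp t * (N / exp 1) ^ N := by
  rcases eq_or_ne N 0 with rfl | hN
  · simpa using one_le_exp ht
  have hN0 : (0 : ℝ) < N := by positivity
  have hbase : t ≤ exp (t / N) * (N / exp 1) := by
    have := add_one_le_exp (t / N - 1)
    rw [exp_sub] at this
    calc t = N * (t / N - 1 + 1) := by field_simp; ring
      _ ≤ N * (exp (t / N) / exp 1) := by gcongr
      _ = exp (t / N) * (N / exp 1) := by ring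
  calc t ^ N ≤ (exp (t / N) * (N / exp 1)) ^ N := pow_le_pow_left₀ ht hbase N
    _ = exp t * (N / exp 1) ^ N := by
      rw [mul_pow, ← exp_nat_mul, mul_div_cancel₀ _ hN0.ne']

theorem exp_sub_sq_div_mul_div_exp_one_pow_le_pow {t : ℝ} (ht : 0 < t) (N : ℕ) :
    exp (t - (t - N) ^ 2 / t) * (N / exp 1) ^ N ≤ t ^ N := by
  rcases eq_or_ne N 0 with rfl | hN
  · simp [sq, ht.ne']
  have hN0 : (0 : ℝ) < N := by positivity
  have hlog : 1 - N / t ≤ log (t / N) := by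
    simpa [inv_div] using one_sub_inv_le_log_of_pos (div_pos ht hN0)
  have hbase : exp (2 - N / t) * (N / exp 1) ≤ t := by
    calc exp (2 - N / t) * (N / exp 1) = exp (1 - N / t) * N := by
          rw [show (2 : ℝ) - N / t = 1 - N / t + 1 by ring, exp_add]
          field_simp
      _ ≤ exp (log (t / N)) * N := by gcongr
      _ = t := by rw [exp_log (div_pos ht hN0)]; field_simp
  calc exp (t - (t - N) ^ 2 / t) * (N / exp 1) ^ N
      = (exp (2 - N / t) * (N / exp 1)) ^ N := by
        rw [mul_pow, ← exp_nat_mul]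
        congr 2
        field_simp
        ring
    _ ≤ t ^ N := pow_le_pow_left₀ (by positivity) hbase N

theorem pow_div_factorial_le_exp_div_sqrt {t : ℝ} (ht : 0 < t) {N : ℕ} (htN : t ≤ 2 * N) :
    t ^ N / N ! ≤ exp t / √t := by
  have hfact : √t * (N / exp 1) ^ N ≤ N ! := by
    refine le_trans ?_ (Stirling.le_factorial_stirling N)
    gcongr
    nlinarith [pi_gt_three]
  have hN : N ≠ 0 := by rintro rfl; simp at htN; linarith
  calc t ^ N / N ! ≤ exp t * (N / exp 1) ^ N / (√t * (N / exp 1) ^ N) :=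
        div_le_div₀ (by positivity) (pow_le_exp_mul_div_exp_one_pow ht.le N) (by positivity) hfact
    _ ≤ exp t / √t := by
        rw [mul_div_mul_right _ _ (by positivity)]

theorem exp_sub_three_div_sqrt_le_pow_div_factorial {t : ℝ} (ht : 1 ≤ t) {N : ℕ} (hN : N ≠ 0)
    (hdist : |(N : ℝ) - t| ≤ 1) :
    exp (t - 3) / √t ≤ t ^ N / N ! := by
  obtain ⟨hNt, htN⟩ := abs_le.mp hdist
  have hloss : exp (t - 1) ≤ exp (t - (t - N) ^ 2 / t) := by
    gcongr
    rw [div_le_one (by linarith)]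
    nlinarith
  have hsqrtN : √N ≤ √2 * √t := by
    rw [← sqrt_mul zero_le_two]
    gcongr
    linarith
  have hsqrt2 : √2 ≤ exp 1 := by
    rw [sqrt_le_left (exp_pos 1).le]
    nlinarith [add_one_le_exp 1]
  have hfact : (N ! : ℝ) ≤ exp 1 * (exp 1 * √t) * (N / exp 1) ^ N := by
    refine (Stirling.factorial_le_exp_one_mul_sqrt_mul hN).trans ?_
    gcongr
    calc √N ≤ √2 * √t := hsqrtN
      _ ≤ exp 1 * √t := by gcongr
  calc exp (t - 3) / √t
        = exp (t - 1) * (N / exp 1) ^ N / (exp 1 * (exp 1 * √t) * (N / exp 1) ^ N) := by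
        rw [show t - 3 = t - 1 - 1 - 1 by ring, exp_sub, exp_sub]
        field_simp
    _ ≤ t ^ N / N ! := by
        gcongr
        exact (mul_le_mul_of_nonneg_right hloss (by positivity)).trans
          (exp_sub_sq_div_mul_div_exp_one_pow_le_pow (by linarith) N)

theorem rpow_neg_half_mul_exp_eq {η : ℝ} (hη : 0 ≤ η) :
    η ^ (-(1:ℝ)/2) * exp (3 * η ^ ((1:ℝ)/3)) = (exp (η ^ ((1:ℝ)/3)) / √(η ^ ((1:ℝ)/3))) ^ 3 := by
  have hsqrt : √(η ^ ((1:ℝ)/3)) ^ 3 = √η := by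
    rw [sqrt_eq_rpow, sqrt_eq_rpow, ← rpow_natCast, ← rpow_mul (rpow_nonneg hη _), ← rpow_mul hη]
    norm_num
  rw [div_pow, hsqrt, ← exp_nat_mul, neg_div, rpow_neg hη, ← sqrt_eq_rpow]
  push_cast
  ring

theorem stmt_2 :
    ∃ c > (0:ℝ), ∃ C > (0:ℝ), ∀ η : ℝ, 2 ≤ η → ∀ N : ℕ, 0 < N →
      |(N : ℝ) - η ^ ((1:ℝ)/3)| ≤ 1 →
      c * η ^ (-(1:ℝ)/2) * Real.exp (3 * η ^ ((1:ℝ)/3)) ≤ η ^ N / (N.factorial : ℝ) ^ 3 ∧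
      η ^ N / (N.factorial : ℝ) ^ 3 ≤ C * η ^ (-(1:ℝ)/2) * Real.exp (3 * η ^ ((1:ℝ)/3)) := by
  refine ⟨exp (-9), exp_pos _, 1, one_pos, fun η hη N hN hdist => ?_⟩
  have hweight := rpow_neg_half_mul_exp_eq (by linarith : 0 ≤ η)
  have hcube : η ^ N / (N ! : ℝ) ^ 3 = ((η ^ ((1:ℝ)/3)) ^ N / N !) ^ 3 := by
    have hroot : (η ^ ((1:ℝ)/3)) ^ 3 = η := by
      rw [← rpow_natCast, ← rpow_mul (by linarith)]
      norm_num
    rw [div_pow, ← pow_mul, mul_comm, pow_mul, hroot]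
  rw [mul_assoc, mul_assoc, hweight, hcube]
  set t := η ^ ((1:ℝ)/3)
  have ht : 1 ≤ t := one_le_rpow (by linarith) (by norm_num)
  constructor
  · calc exp (-9) * (exp t / √t) ^ 3 = (exp (t - 3) / √t) ^ 3 := by
          rw [div_pow, div_pow, ← exp_nat_mul, ← exp_nat_mul, mul_div_assoc', ← exp_add]
          ring_nf
      _ ≤ (t ^ N / N !) ^ 3 := pow_le_pow_left₀ (by positivity)
          (exp_sub_three_div_sqrt_le_pow_div_factorial ht hN.ne' hdist) 3
  · rw [one_mul]
    refine pow_le_pow_left₀ (by positivity) (pow_div_factorial_le_exp_div_sqrt (by linarith) ?_) 3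
    have : (1 : ℝ) ≤ N := by exact_mod_cast hN
    linarith [(abs_le.mp hdist).1]
end

section
/- Let k be a nonzero integer and η a real number. Then for every t ≥ 0, e^{−∫₀ᵗ ((k s − η)² + k²) ds} · ∫₀ᵗ e^{∫₀^τ ((k s − η)² + k²) ds} dτ ≤ C / ((k t − η)² + k²) for an absolute constant C > 0. -/
open Real intervalIntegral Set

/-!
Writing `P(τ) = ∫₀^τ ((k s - η)² + k²) ds`, the left side is `∫₀ᵗ exp (-(P t - P τ)) dτ`.
The explicit cubic `P t - P τ` dominates `(t - τ) M / 4` with `M = (k t - η)² + k²`,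
so the integral is at most `∫₀ᵗ exp (-(t - τ) M / 4) dτ ≤ 4 / M`.
-/

theorem integral_sq_mul_sub_add (a η c x y : ℝ) :
    ∫ s in y..x, ((a * s - η) ^ 2 + c) =
      (x - y) * (((a * x - η) ^ 2 + (a * x - η) * (a * y - η) + (a * y - η) ^ 2) / 3 + c) := by
  have hderiv : ∀ s : ℝ, HasDerivAt (fun s => a ^ 2 * s ^ 3 / 3 - a * η * s ^ 2 + (η ^ 2 + c) * s)
      ((a * s - η) ^ 2 + c) s := by
    intro s
    refine (((((hasDerivAt_pow 3 s).const_mul (a ^ 2)).div_const 3).sub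
      ((hasDerivAt_pow 2 s).const_mul (a * η))).add
      ((hasDerivAt_id s).const_mul (η ^ 2 + c))).congr_deriv ?_
    ring
  rw [integral_eq_sub_of_hasDerivAt (fun s _ => hderiv s) (by apply Continuous.intervalIntegrable; fun_prop)]
  ring

/-- With `A = a x - η`, `B = a y - η`: `A² + AB + B² - 3A²/4 = (A/2 + B)²`. -/
theorem mul_sub_le_integral_sq_mul_sub_add {a η c x y : ℝ} (hc : 0 ≤ c) (hyx : y ≤ x) :
    ((a * x - η) ^ 2 + c) / 4 * (x - y) ≤ ∫ s in y..x, ((a * s - η) ^ 2 + c) := by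
  rw [integral_sq_mul_sub_add]
  have hxy : 0 ≤ x - y := sub_nonneg.mpr hyx
  nlinarith [mul_nonneg hxy (sq_nonneg ((a * x - η) / 2 + (a * y - η))), mul_nonneg hxy hc]

theorem integral_exp_mul_add_neg_le_inv {m t : ℝ} (hm : 0 < m) :
    ∫ τ in (0:ℝ)..t, exp (m * τ + -(m * t)) ≤ m⁻¹ := by
  rw [integral_comp_mul_add (fun u => exp u) hm.ne', integral_exp, smul_eq_mul, mul_zero, zero_add, add_neg_cancel, exp_zero]
  nlinarith [inv_pos.mpr hm, exp_pos (-(m * t))]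

theorem exp_neg_integral_mul_integral_exp_integral_le_inv {p : ℝ → ℝ} (hp : Continuous p) {m t : ℝ}
    (hm : 0 < m) (ht : 0 ≤ t) (hlow : ∀ τ ∈ Icc 0 t, m * (t - τ) ≤ ∫ s in τ..t, p s) :
    exp (-∫ s in (0:ℝ)..t, p s) * ∫ τ in (0:ℝ)..t, exp (∫ s in (0:ℝ)..τ, p s) ≤ m⁻¹ := by
  have hint : ∀ a b : ℝ, IntervalIntegrable p MeasureTheory.volume a b :=
    fun a b => hp.intervalIntegrable a b
  calc exp (-∫ s in (0:ℝ)..t, p s) * ∫ τ in (0:ℝ)..t, exp (∫ s in (0:ℝ)..τ, p s)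
      = ∫ τ in (0:ℝ)..t, exp (-∫ s in τ..t, p s) := by
        rw [← integral_const_mul]
        refine integral_congr fun τ _ => ?_
        rw [← exp_add, ← integral_interval_sub_left (hint 0 t) (hint 0 τ)]
        ring_nf
    _ ≤ ∫ τ in (0:ℝ)..t, exp (m * τ + -(m * t)) := by
      refine integral_mono_on ht ?_ (by apply Continuous.intervalIntegrable; fun_prop) ?_
      · have : Continuous fun τ => ∫ s in τ..t, p s := by
          simp_rw [integral_symm t]
          exact (continuous_primitive hint t).neg
        apply Continuous.intervalIntegrable; fun_prop
      · intro τ hτ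
        exact exp_le_exp.mpr (by linarith [hlow τ hτ])
    _ ≤ m⁻¹ := integral_exp_mul_add_neg_le_inv hm

theorem stmt_8 :
    ∃ C > (0:ℝ), ∀ k : ℤ, k ≠ 0 → ∀ η t : ℝ, 0 ≤ t →
      Real.exp (-(∫ s in (0:ℝ)..t, (((k : ℝ) * s - η) ^ 2 + (k : ℝ) ^ 2))) *
          (∫ τ in (0:ℝ)..t,
            Real.exp (∫ s in (0:ℝ)..τ, (((k : ℝ) * s - η) ^ 2 + (k : ℝ) ^ 2)))
        ≤ C / (((k : ℝ) * t - η) ^ 2 + (k : ℝ) ^ 2) := by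
  refine ⟨4, by norm_num, fun k hk η t ht => ?_⟩
  have hbound := exp_neg_integral_mul_integral_exp_integral_le_inv (by fun_prop)
    (by positivity : 0 < (((k : ℝ) * t - η) ^ 2 + (k : ℝ) ^ 2) / 4) ht
    fun τ hτ => mul_sub_le_integral_sq_mul_sub_add (sq_nonneg (k : ℝ)) hτ.2
  rwa [inv_div] at hbound
end
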